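/- arXiv:math/0309193 — 4 statements merged into one kernel-verified Lean document; each statement's English description precedes it below -/
import Mathlib

section
/- Let G be a group acting by isometries on a metric space Y, and let g be an element acting on a geodesic line A : ℝ → Y by translation A(t) ↦ A(t+τ) with τ ≠ 0. If γ₁, γ₂ ∈ G both commute with g, preserve A, and act on A by translations by τ₁ and τ₂ respectively, then the commutator [γ₁,γ₂] acts trivially on A. Consequently, if a central element γ₀ of a group Γ is mapped by a homomorphism ρ to a hyperbolic isometry with axis A₀, and if [γ₁,γ₂] = γ₀^p for some p ≠ 0, then we reach a contradiction: ρ(γ₀) cannot be hyperbolic. -/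
/-- If a central element `γ₀` of a group `Γ` is mapped by `ρ` to an isometry translating a
geodesic line `A` by `τ ≠ 0`, while `γ₁, γ₂` act on `A` by translations, then the commutator
`[γ₁,γ₂]` acts trivially on `A`; hence `[γ₁,γ₂] = γ₀^p` with `p ≠ 0` is impossible:
`ρ(γ₀)` cannot be a hyperbolic isometry. -/
theorem central_element_not_hyperbolic {Γ : Type*} [Group Γ] {Y : Type*} [MetricSpace Y]
    (ρ : Γ →* (Y ≃ᵢ Y)) (γ₀ γ₁ γ₂ : Γ)
    (hcentral : γ₀ ∈ Subgroup.center Γ)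
    (A : ℝ → Y) (hA : Function.Injective A)
    (τ τ₁ τ₂ : ℝ) (hτ : τ ≠ 0)
    (h0 : ∀ t, ρ γ₀ (A t) = A (t + τ))
    (h1 : ∀ t, ρ γ₁ (A t) = A (t + τ₁))
    (h2 : ∀ t, ρ γ₂ (A t) = A (t + τ₂))
    (p : ℤ) (hp : p ≠ 0)
    (hcomm : γ₁ * γ₂ * γ₁⁻¹ * γ₂⁻¹ = γ₀ ^ p) :
    (∀ t, ρ (γ₁ * γ₂ * γ₁⁻¹ * γ₂⁻¹) (A t) = A t) ∧ False := by
  have h1' : ∀ t, ρ γ₁⁻¹ (A t) = A (t - τ₁) := by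
    intro t
    have : ρ γ₁ (A (t - τ₁)) = A t := by rw [h1]; ring_nf
    calc ρ γ₁⁻¹ (A t) = ρ γ₁⁻¹ (ρ γ₁ (A (t - τ₁))) := by rw [this]
      _ = A (t - τ₁) := by
          rw [← IsometryEquiv.mul_apply, ← map_mul, inv_mul_cancel, map_one]; rfl
  have h2' : ∀ t, ρ γ₂⁻¹ (A t) = A (t - τ₂) := by
    intro t
    have : ρ γ₂ (A (t - τ₂)) = A t := by rw [h2]; ring_nf
    calc ρ γ₂⁻¹ (A t) = ρ γ₂⁻¹ (ρ γ₂ (A (t - τ₂))) := by rw [this]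
      _ = A (t - τ₂) := by
          rw [← IsometryEquiv.mul_apply, ← map_mul, inv_mul_cancel, map_one]; rfl
  have triv : ∀ t, ρ (γ₁ * γ₂ * γ₁⁻¹ * γ₂⁻¹) (A t) = A t := by
    intro t
    have : ρ (γ₁ * γ₂ * γ₁⁻¹ * γ₂⁻¹) (A t)
        = ρ γ₁ (ρ γ₂ (ρ γ₁⁻¹ (ρ γ₂⁻¹ (A t)))) := by
      simp [map_mul]
    rw [this, h2', h1', h2, h1]
    ring_nf
  refine ⟨triv, ?_⟩
  have hpow : ∀ n : ℕ, ∀ t, ρ (γ₀ ^ (n : ℤ)) (A t) = A (t + n * τ) := by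
    intro n
    induction n with
    | zero => intro t; simp
    | succ k ih =>
      intro t
      have : ρ (γ₀ ^ ((k + 1 : ℕ) : ℤ)) (A t) = ρ (γ₀ ^ (k : ℤ)) (ρ γ₀ (A t)) := by
        push_cast
        rw [zpow_add, zpow_one, map_mul]; rfl
      rw [this, h0, ih]
      push_cast; ring_nf
  have key : ∀ t, ρ (γ₀ ^ p) (A t) = A (t + p * τ) := by
    rcases Int.lt_or_lt_of_ne hp with hneg | hpos
    · intro t
      obtain ⟨n, hn⟩ : ∃ n : ℕ, p = -(n : ℤ) :=
        ⟨p.natAbs, by omega⟩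
      subst hn
      have h := hpow n (t + (-(n : ℤ)) * τ)
      have harg : t + (-(n : ℤ)) * τ + (n : ℝ) * τ = t := by push_cast; ring
      rw [harg] at h
      have : ρ (γ₀ ^ (-(n : ℤ))) (ρ (γ₀ ^ (n : ℤ)) (A (t + (-(n : ℤ)) * τ))) =
          A (t + (-(n : ℤ)) * τ) := by
        rw [← IsometryEquiv.mul_apply, ← map_mul, ← zpow_add]
        simp
      rw [h] at this
      rw [this]; push_cast; ring_nf
    · obtain ⟨n, hn⟩ : ∃ n : ℕ, p = (n : ℤ) := ⟨p.natAbs, by omega⟩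
      subst hn; exact hpow n
  have := key 0
  rw [← hcomm, triv 0] at this
  have : (0 : ℝ) = 0 + (p : ℝ) * τ := hA this
  have : (p : ℝ) * τ = 0 := by linarith
  rcases mul_eq_zero.mp this with h | h
  · exact hp (by exact_mod_cast h)
  · exact hτ h
end

section
/- On a Hermitian vector space (V,g,J) of real dimension 2m, the tensor I_ℂ defined by I_ℂ(X,Y,Z,W) = (1/4)[I(X,Y,Z,W) + I(JX,JY,Z,W) + 2g(JX,Y)g(JZ,W)], with I(X,Y,Z,W) = g(X,Z)g(Y,W) - g(Y,Z)g(X,W), is the orthogonal projection of I onto the subspace of Kähler curvature-type tensors: I_ℂ is of Kähler type (I_ℂ(X,Y,JZ,JW) = I_ℂ(X,Y,Z,W)), and for every algebraic curvature tensor T of Kähler type, ⟨I - I_ℂ, T⟩ = 0. -/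
/-!
Write `I_ℂ = ¼ (I + I(J·,J·,·,·) + 2 ω ⊗ ω)` with `ω = g(J·,·)`; each of the three pieces
pairs with a Kähler curvature tensor `T` to `2 Scal(T)`, so
`⟨I - I_ℂ, T⟩ = 2 Scal - ¼ (2 + 2 + 4) Scal = 0`.
Contracting against the orthonormal basis,
`⟨I(A·,A·,·,·), T⟩ = 2 Σ T(eᵢ, eⱼ, A eᵢ, A eⱼ)`, which is `2 Scal` for `A = 1` and, by the
Kähler symmetry, for `A = J`. Likewise `⟨ω ⊗ ω, T⟩ = Σ T(eᵢ, J eᵢ, eₖ, J eₖ)`, which the first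
Bianchi identity splits into `Σ T(J eᵢ, eₖ, J eᵢ, eₖ) + Scal`; the first sum is `Scal` again
since `(J eᵢ)` is orthonormal too.
-/

open Finset
open scoped RealInnerProductSpace

section

variable {V : Type*} [NormedAddCommGroup V] [InnerProductSpace ℝ V] {ι : Type*} [Fintype ι]

theorem OrthonormalBasis.sum_inner_mul_apply (b : OrthonormalBasis ι ℝ V) (f : V →ₗ[ℝ] ℝ)
    (x : V) : ∑ i, ⟪x, b i⟫ * f (b i) = f x := by
  conv_rhs => rw [← b.sum_repr' x]
  simp [map_sum, real_inner_comm]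

theorem MultilinearMap.sum_inner_mul_apply_update {κ : Type*} [DecidableEq κ]
    (b : OrthonormalBasis ι ℝ V) (T : MultilinearMap ℝ (fun _ : κ => V) ℝ) (m : κ → V) (p : κ)
    (x : V) : ∑ i, ⟪x, b i⟫ * T (Function.update m p (b i)) = T (Function.update m p x) := by
  simpa using b.sum_inner_mul_apply (T.toLinearMap m p) x

theorem inner_apply_right_eq_neg_inner_apply_left {J : V → V} (hJ2 : ∀ x, J (J x) = -x)
    (hJiso : ∀ x y : V, ⟪J x, J y⟫ = ⟪x, y⟫) (x y : V) : ⟪x, J y⟫ = -⟪J x, y⟫ := by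
  rw [← hJiso x (J y), hJ2, inner_neg_right]

end

namespace CurvatureTensor

variable {V : Type*} [NormedAddCommGroup V] [InnerProductSpace ℝ V] {ι : Type*} [Fintype ι]
  (b : OrthonormalBasis ι ℝ V) (T : MultilinearMap ℝ (fun _ : Fin 4 => V) ℝ)

theorem sum_inner_mul_apply_fst (x y z w : V) :
    ∑ i, ⟪x, b i⟫ * T ![b i, y, z, w] = T ![x, y, z, w] := by
  convert T.sum_inner_mul_apply_update b ![0, y, z, w] 0 x using 4 <;>
    ext j <;> fin_cases j <;> rfl

theorem sum_inner_mul_apply_snd (x y z w : V) :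
    ∑ i, ⟪y, b i⟫ * T ![x, b i, z, w] = T ![x, y, z, w] := by
  convert T.sum_inner_mul_apply_update b ![x, 0, z, w] 1 y using 4 <;>
    ext j <;> fin_cases j <;> rfl

theorem sum_inner_mul_apply_third (x y z w : V) :
    ∑ i, ⟪z, b i⟫ * T ![x, y, b i, w] = T ![x, y, z, w] := by
  convert T.sum_inner_mul_apply_update b ![x, y, 0, w] 2 z using 4 <;>
    ext j <;> fin_cases j <;> rfl

theorem sum_inner_mul_apply_fourth (x y z w : V) :
    ∑ i, ⟪w, b i⟫ * T ![x, y, z, b i] = T ![x, y, z, w] := by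
  convert T.sum_inner_mul_apply_update b ![x, y, z, 0] 3 w using 4 <;>
    ext j <;> fin_cases j <;> rfl

theorem apply_neg_third (x y z w : V) : T ![x, y, -z, w] = -T ![x, y, z, w] := by
  have h := T.map_update_neg ![x, y, 0, w] 2 z
  have hupd : ∀ v, Function.update ![x, y, 0, w] 2 v = ![x, y, v, w] := fun v => by
    ext j; fin_cases j <;> rfl
  rwa [hupd, hupd] at h

theorem sum_sum_inner_mul_inner_mul_apply (x y z w : V) :
    ∑ k, ∑ l, ⟪z, b k⟫ * ⟪w, b l⟫ * T ![x, y, b k, b l] = T ![x, y, z, w] := by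
  simp_rw [mul_assoc, ← mul_sum, sum_inner_mul_apply_fourth, sum_inner_mul_apply_third]

noncomputable def scal : ℝ := ∑ i, ∑ j, T ![b i, b j, b i, b j]

noncomputable def pairing : (V → V → V → V → ℝ) →ₗ[ℝ] ℝ where
  toFun S := ∑ i, ∑ j, ∑ k, ∑ l, S (b i) (b j) (b k) (b l) * T ![b i, b j, b k, b l]
  map_add' S S' := by simp only [Pi.add_apply, add_mul, sum_add_distrib]
  map_smul' c S := by
    simp only [Pi.smul_apply, smul_eq_mul, mul_assoc, ← mul_sum, RingHom.id_apply]

def tensorI (A : V → V) : V → V → V → V → ℝ :=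
  fun X Y Z W => ⟪A X, Z⟫ * ⟪A Y, W⟫ - ⟪A Y, Z⟫ * ⟪A X, W⟫

def kahlerFormSq (J : V → V) : V → V → V → V → ℝ :=
  fun X Y Z W => ⟪J X, Y⟫ * ⟪J Z, W⟫

def IsKahlerType (J : V → V) : Prop :=
  ∀ X Y Z W : V, T ![X, Y, J Z, J W] = T ![X, Y, Z, W]

variable {T}

theorem pairing_tensorI (hT2 : ∀ X Y Z W : V, T ![X, Y, Z, W] = -T ![X, Y, W, Z])
    (A : V → V) :
    pairing b T (tensorI A) = 2 * ∑ i, ∑ j, T ![b i, b j, A (b i), A (b j)] := by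
  have hij : ∀ i j, ∑ k, ∑ l, tensorI A (b i) (b j) (b k) (b l) * T ![b i, b j, b k, b l] =
      2 * T ![b i, b j, A (b i), A (b j)] := by
    intro i j
    simp only [tensorI, sub_mul, sum_sub_distrib, sum_sum_inner_mul_inner_mul_apply]
    rw [hT2 (b i) (b j) (A (b j))]
    ring
  simp only [pairing, LinearMap.coe_mk, AddHom.coe_mk, hij, mul_sum]

theorem pairing_kahlerFormSq (J : V → V) :
    pairing b T (kahlerFormSq J) = ∑ i, ∑ k, T ![b i, J (b i), b k, J (b k)] := by
  simp only [pairing, LinearMap.coe_mk, AddHom.coe_mk, kahlerFormSq]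
  refine sum_congr rfl fun i _ => ?_
  rw [sum_comm]
  refine sum_congr rfl fun k _ => ?_
  simp_rw [mul_assoc, ← mul_sum, sum_inner_mul_apply_fourth, sum_inner_mul_apply_snd]

section Kahler

variable {J : V → V}

theorem apply_J_third (hJ2 : ∀ x, J (J x) = -x)
    (hT : IsKahlerType T J) (X Y Z W : V) :
    T ![X, Y, J Z, W] = -T ![X, Y, Z, J W] := by
  have h := hT X Y (J Z) W
  rw [hJ2, apply_neg_third] at h
  linarith

theorem sum_apply_J_J (hJ2 : ∀ x, J (J x) = -x) (hJiso : ∀ x y : V, ⟪J x, J y⟫ = ⟪x, y⟫)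
    (hT : IsKahlerType T J) (x y : V) :
    ∑ i, T ![J (b i), x, J (b i), y] = ∑ i, T ![b i, x, b i, y] := by
  have hskew := inner_apply_right_eq_neg_inner_apply_left hJ2 hJiso
  calc ∑ i, T ![J (b i), x, J (b i), y]
      = ∑ i, ∑ j, ⟪J (b i), b j⟫ * T ![b j, x, J (b i), y] := by
        simp only [sum_inner_mul_apply_fst]
    _ = ∑ j, ∑ i, ⟪J (b j), b i⟫ * T ![b j, x, b i, J y] := by
        rw [sum_comm]
        refine sum_congr rfl fun j _ => sum_congr rfl fun i _ => ?_
        rw [apply_J_third hJ2 hT, real_inner_comm (b i) (J (b j)), hskew]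
        ring
    _ = ∑ j, T ![b j, x, b j, y] := by
        simp only [sum_inner_mul_apply_third, hT _ _ _ _]

theorem apply_self_J_self_J (hJ2 : ∀ x, J (J x) = -x)
    (hT : IsKahlerType T J)
    (hT1 : ∀ X Y Z W : V, T ![X, Y, Z, W] = -T ![Y, X, Z, W])
    (hTbianchi : ∀ X Y Z W : V, T ![X, Y, Z, W] + T ![Y, Z, X, W] + T ![Z, X, Y, W] = 0)
    (X Y : V) : T ![X, J X, Y, J Y] = T ![J X, Y, J X, Y] + T ![X, Y, X, Y] := by
  have h1 : T ![Y, X, J X, J Y] = -T ![X, Y, X, Y] := by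
    rw [hT, hT1]
  have h2 : T ![J X, Y, X, J Y] = -T ![J X, Y, J X, Y] := by
    rw [apply_J_third hJ2 hT, neg_neg]
  linarith [hTbianchi X (J X) Y (J Y)]

theorem pairing_tensorI_of_kahler (hT : IsKahlerType T J)
    (hT2 : ∀ X Y Z W : V, T ![X, Y, Z, W] = -T ![X, Y, W, Z]) :
    pairing b T (tensorI J) = 2 * scal b T := by
  simp only [pairing_tensorI b hT2, hT _ _ _ _, scal]

theorem pairing_kahlerFormSq_of_kahler (hJ2 : ∀ x, J (J x) = -x)
    (hJiso : ∀ x y : V, ⟪J x, J y⟫ = ⟪x, y⟫) (hT : IsKahlerType T J)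
    (hT1 : ∀ X Y Z W : V, T ![X, Y, Z, W] = -T ![Y, X, Z, W])
    (hTbianchi : ∀ X Y Z W : V, T ![X, Y, Z, W] + T ![Y, Z, X, W] + T ![Z, X, Y, W] = 0) :
    pairing b T (kahlerFormSq J) = 2 * scal b T := by
  have htrace : ∑ i, ∑ k, T ![J (b i), b k, J (b i), b k] = scal b T := by
    rw [sum_comm]
    simp only [sum_apply_J_J b hJ2 hJiso hT]
    exact sum_comm
  rw [pairing_kahlerFormSq]
  simp only [apply_self_J_self_J hJ2 hT hT1 hTbianchi, sum_add_distrib, htrace, scal]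
  ring

end Kahler

end CurvatureTensor

open CurvatureTensor in
theorem IC_is_orthogonal_projection_of_I_general
    {V : Type*} [NormedAddCommGroup V] [InnerProductSpace ℝ V]
    {ι : Type*} [Fintype ι] (b : OrthonormalBasis ι ℝ V)
    (J : V →ₗ[ℝ] V) (hJ2 : ∀ x, J (J x) = -x)
    (hJiso : ∀ x y : V, (inner ℝ (J x) (J y) : ℝ) = inner ℝ x y)
    (T : MultilinearMap ℝ (fun _ : Fin 4 => V) ℝ)
    (hT1 : ∀ X Y Z W : V, T ![X, Y, Z, W] = -T ![Y, X, Z, W])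
    (hT2 : ∀ X Y Z W : V, T ![X, Y, Z, W] = -T ![X, Y, W, Z])
    (hTbianchi : ∀ X Y Z W : V,
      T ![X, Y, Z, W] + T ![Y, Z, X, W] + T ![Z, X, Y, W] = 0)
    (hKaehler : ∀ X Y Z W : V, T ![X, Y, J Z, J W] = T ![X, Y, Z, W]) :
    let g : V → V → ℝ := fun x y => inner ℝ x y
    let Ifun : V → V → V → V → ℝ := fun X Y Z W => g X Z * g Y W - g Y Z * g X W
    let ICfun : V → V → V → V → ℝ := fun X Y Z W =>
      (4 : ℝ)⁻¹ * (Ifun X Y Z W + Ifun (J X) (J Y) Z W + 2 * g (J X) Y * g (J Z) W)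
    (∀ X Y Z W : V, ICfun X Y (J Z) (J W) = ICfun X Y Z W) ∧
    (∑ i, ∑ j, ∑ k, ∑ l,
      (Ifun (b i) (b j) (b k) (b l) - ICfun (b i) (b j) (b k) (b l)) *
        T ![b i, b j, b k, b l]) = 0 := by
  intro g Ifun ICfun
  have hskew := inner_apply_right_eq_neg_inner_apply_left hJ2 hJiso
  refine ⟨fun X Y Z W => ?_, ?_⟩
  · simp only [ICfun, Ifun, g, hJiso, hJ2, hskew, map_neg, inner_neg_left]
    ring
  · have hdecomp : (fun X Y Z W => Ifun X Y Z W - ICfun X Y Z W) =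
        (3 / 4 : ℝ) • tensorI id - (4⁻¹ : ℝ) • tensorI J - (2⁻¹ : ℝ) • kahlerFormSq J := by
      funext X Y Z W
      simp only [Ifun, ICfun, g, tensorI, kahlerFormSq, Pi.sub_apply, Pi.smul_apply,
        smul_eq_mul, id]
      ring
    change pairing b T (fun X Y Z W => Ifun X Y Z W - ICfun X Y Z W) = 0
    rw [hdecomp, map_sub, map_sub, map_smul, map_smul, map_smul, pairing_tensorI b hT2 id,
      pairing_tensorI_of_kahler b hKaehler hT2,
      pairing_kahlerFormSq_of_kahler b hJ2 hJiso hKaehler hT1 hTbianchi]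
    simp only [scal, id, smul_eq_mul]
    ring

/-- On a Hermitian vector space `(V, g, J)`, the tensor `I_ℂ` is the orthogonal
projection of `I` onto the space of Kähler curvature-type tensors: `I_ℂ` is of Kähler
type, and `⟨I - I_ℂ, T⟩ = 0` for every algebraic curvature tensor `T` of Kähler type,
where `⟨S,T⟩ = Σ S(e_i,e_j,e_k,e_l) T(e_i,e_j,e_k,e_l)` over an orthonormal basis. -/
theorem IC_is_orthogonal_projection_of_I
    {V : Type*} [NormedAddCommGroup V] [InnerProductSpace ℝ V]
    {ι : Type*} [Fintype ι] (b : OrthonormalBasis ι ℝ V)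
    (J : V →ₗ[ℝ] V) (hJ2 : ∀ x, J (J x) = -x)
    (hJiso : ∀ x y : V, (inner ℝ (J x) (J y) : ℝ) = inner ℝ x y)
    (T : MultilinearMap ℝ (fun _ : Fin 4 => V) ℝ)
    (hT1 : ∀ X Y Z W : V, T ![X, Y, Z, W] = -T ![Y, X, Z, W])
    (hT2 : ∀ X Y Z W : V, T ![X, Y, Z, W] = -T ![X, Y, W, Z])
    (hT3 : ∀ X Y Z W : V, T ![X, Y, Z, W] = T ![Z, W, X, Y])
    (hTbianchi : ∀ X Y Z W : V,
      T ![X, Y, Z, W] + T ![Y, Z, X, W] + T ![Z, X, Y, W] = 0)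
    (hKaehler : ∀ X Y Z W : V, T ![X, Y, J Z, J W] = T ![X, Y, Z, W]) :
    let g : V → V → ℝ := fun x y => inner ℝ x y
    let Ifun : V → V → V → V → ℝ := fun X Y Z W => g X Z * g Y W - g Y Z * g X W
    let ICfun : V → V → V → V → ℝ := fun X Y Z W =>
      (4 : ℝ)⁻¹ * (Ifun X Y Z W + Ifun (J X) (J Y) Z W + 2 * g (J X) Y * g (J Z) W)
    (∀ X Y Z W : V, ICfun X Y (J Z) (J W) = ICfun X Y Z W) ∧
    (∑ i, ∑ j, ∑ k, ∑ l,
      (Ifun (b i) (b j) (b k) (b l) - ICfun (b i) (b j) (b k) (b l)) *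
        T ![b i, b j, b k, b l]) = 0 :=
  IC_is_orthogonal_projection_of_I_general b J hJ2 hJiso T hT1 hT2 hTbianchi hKaehler
end

section
/- For any algebraic curvature tensor T on a Hermitian vector space of complex dimension m, ⟨I_ℂ - I, T⟩ = -6 Scal_ℂ(T), where Scal_ℂ(T) = Σ_{k,l=1}^m T(ζ_k, ζ_l, conj(ζ_k), conj(ζ_l)) is the complexified scalar curvature computed in an orthonormal basis (ζ_k) of the (1,0)-part of the complexified space. -/
/-! Contracting `I` and `I_ℂ` against `T` in the orthonormal basis `b` turns `⟨I_ℂ - I, T⟩` into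
a double sum over `i, j` of values of `T` on `b i, b j, J (b i), J (b j)`. Grouping the basis into
the pairs `e_k, J e_k`, the four terms belonging to `(k, l)` add up, by the symmetries of `T`,
`J² = -1` and the Bianchi identity, to `-3/2` times a real expression `R(e_k, e_l)`.
Expanding `T_ℂ(ζ_k, ζ_l, ζ̄_k, ζ̄_l)` by multilinearity gives `R(e_k, e_l) / 4`: its imaginary
part cancels by pair symmetry. -/

open TensorProduct
open scoped InnerProductSpace

namespace MultilinearMap
variable {R M N : Type*} [CommSemiring R] [AddCommMonoid M] [Module R M] [AddCommMonoid N]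
  [Module R N]

def curry₄ (f : MultilinearMap R (fun _ : Fin 4 => M) N) :
    M →ₗ[R] M →ₗ[R] M →ₗ[R] M →ₗ[R] N :=
  LinearMap.mk₂ R (fun x y => LinearMap.mk₂ R (fun z w => f ![x, y, z, w])
      (fun z z' w => ((f.curryLeft x).curryLeft y).cons_add ![w] z z')
      (fun c z w => ((f.curryLeft x).curryLeft y).cons_smul ![w] c z)
      (fun z w w' => (((f.curryLeft x).curryLeft y).curryLeft z).cons_add ![] w w')
      (fun c z w => (((f.curryLeft x).curryLeft y).curryLeft z).cons_smul ![] c w))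
    (fun x x' y => by ext z w; exact f.cons_add ![y, z, w] x x')
    (fun c x y => by ext z w; exact f.cons_smul ![y, z, w] c x)
    (fun x y y' => by ext z w; exact (f.curryLeft x).cons_add ![z, w] y y')
    (fun c x y => by ext z w; exact (f.curryLeft x).cons_smul ![z, w] c y)

@[simp]
theorem curry₄_apply (f : MultilinearMap R (fun _ : Fin 4 => M) N) (x y z w : M) :
    f.curry₄ x y z w = f ![x, y, z, w] :=
  rfl

end MultilinearMap

section Curvature
variable {V : Type*} [AddCommGroup V] [Module ℝ V]

structure IsAlgebraicCurvatureTensor (t : V →ₗ[ℝ] V →ₗ[ℝ] V →ₗ[ℝ] V →ₗ[ℝ] ℝ) : Prop where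
  antisymm_left : ∀ X Y Z W, t X Y Z W = -t Y X Z W
  antisymm_right : ∀ X Y Z W, t X Y Z W = -t X Y W Z
  pair_symm : ∀ X Y Z W, t X Y Z W = t Z W X Y
  bianchi : ∀ X Y Z W, t X Y Z W + t Y Z X W + t Z X Y W = 0

noncomputable def icSubIPairingTerm (t : V →ₗ[ℝ] V →ₗ[ℝ] V →ₗ[ℝ] V →ₗ[ℝ] ℝ) (J : V →ₗ[ℝ] V)
    (x y : V) : ℝ :=
  -(3 / 4) * (t x y x y - t x y y x) + 4⁻¹ * (t x y (J x) (J y) - t x y (J y) (J x)) +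
    2⁻¹ * t x (J x) y (J y)

def complexScalarTerm (t : V →ₗ[ℝ] V →ₗ[ℝ] V →ₗ[ℝ] V →ₗ[ℝ] ℝ) (J : V →ₗ[ℝ] V) (x y : V) : ℝ :=
  t x y x y + t (J x) (J y) (J x) (J y) + t (J x) y (J x) y + t x (J y) x (J y) -
    2 * t x y (J x) (J y) + 2 * t (J x) y x (J y)

theorem icSubIPairingTerm_add_J_eq {t : V →ₗ[ℝ] V →ₗ[ℝ] V →ₗ[ℝ] V →ₗ[ℝ] ℝ}
    (ht : IsAlgebraicCurvatureTensor t) {J : V →ₗ[ℝ] V} (hJ : ∀ x, J (J x) = -x) (x y : V) :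
    icSubIPairingTerm t J x y + icSubIPairingTerm t J x (J y) + icSubIPairingTerm t J (J x) y +
      icSubIPairingTerm t J (J x) (J y) = -(3 / 2) * complexScalarTerm t J x y := by
  obtain ⟨hl, hr, hp, hb⟩ := ht
  have hterm : ∀ a c, icSubIPairingTerm t J a c =
      -(3 / 2) * t a c a c + 2⁻¹ * t a c (J a) (J c) + 2⁻¹ * t a (J a) c (J c) := by
    intro a c
    rw [icSubIPairingTerm]
    linear_combination (3 / 4) * hr a c c a - 4⁻¹ * hr a c (J c) (J a)
  have hbianchi : t x (J x) y (J y) = t x y (J x) (J y) - t (J x) y x (J y) := by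
    linear_combination hb x (J x) y (J y) - hl y x (J x) (J y)
  simp only [hterm, complexScalarTerm, hJ, map_neg, LinearMap.neg_apply]
  linear_combination (-1 / 2) * hp x (J y) (J x) y + 2⁻¹ * hp (J x) (J y) x y -
    2⁻¹ * hl (J x) x y (J y) + 2⁻¹ * hl (J x) x (J y) y - hr x (J x) (J y) y + 2 * hbianchi

end Curvature

section Complexification
variable {V : Type*} [AddCommGroup V] [Module ℝ V]

noncomputable def holComponent (J : V →ₗ[ℝ] V) (x : V) : ℂ ⊗[ℝ] V :=
  ((Real.sqrt 2 : ℂ))⁻¹ • ((1 : ℂ) ⊗ₜ[ℝ] x - Complex.I • ((1 : ℂ) ⊗ₜ[ℝ] J x))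

noncomputable def antiholComponent (J : V →ₗ[ℝ] V) (x : V) : ℂ ⊗[ℝ] V :=
  ((Real.sqrt 2 : ℂ))⁻¹ • ((1 : ℂ) ⊗ₜ[ℝ] x + Complex.I • ((1 : ℂ) ⊗ₜ[ℝ] J x))

theorem apply_holComponent_antiholComponent
    {t : V →ₗ[ℝ] V →ₗ[ℝ] V →ₗ[ℝ] V →ₗ[ℝ] ℝ} (hpair : ∀ X Y Z W, t X Y Z W = t Z W X Y)
    {tc : ℂ ⊗[ℝ] V →ₗ[ℂ] ℂ ⊗[ℝ] V →ₗ[ℂ] ℂ ⊗[ℝ] V →ₗ[ℂ] ℂ ⊗[ℝ] V →ₗ[ℂ] ℂ}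
    (htc : ∀ X Y Z W : V, tc (1 ⊗ₜ X) (1 ⊗ₜ Y) (1 ⊗ₜ Z) (1 ⊗ₜ W) = t X Y Z W)
    (J : V →ₗ[ℝ] V) (x y : V) :
    tc (holComponent J x) (holComponent J y) (antiholComponent J x) (antiholComponent J y) =
      ((4 : ℝ)⁻¹ * complexScalarTerm t J x y : ℝ) := by
  have hp : ∀ X Y Z W, (t X Y Z W : ℂ) = t Z W X Y := fun X Y Z W => congrArg _ (hpair X Y Z W)
  have hsqrt : ((Real.sqrt 2 : ℂ))⁻¹ ^ 4 = 4⁻¹ := by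
    rw [inv_pow, ← Complex.ofReal_pow, show (4 : ℕ) = 2 * 2 from rfl, pow_mul,
      Real.sq_sqrt zero_le_two]
    norm_num
  simp only [holComponent, antiholComponent, map_smul, map_sub, map_add, LinearMap.smul_apply,
    LinearMap.sub_apply, LinearMap.add_apply, htc, smul_eq_mul, complexScalarTerm]
  push_cast
  ring_nf
  rw [hsqrt, Complex.I_sq, Complex.I_pow_three, Complex.I_pow_four]
  linear_combination (-Complex.I / 4) * (hp (J x) y x y + hp x (J y) x y +
      hp (J x) (J y) (J x) y + hp (J x) (J y) x (J y)) +
    4⁻¹ * (hp x (J y) (J x) y - hp (J x) (J y) x y)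

end Complexification

namespace OrthonormalBasis
variable {ι V : Type*} [Fintype ι] [NormedAddCommGroup V] [InnerProductSpace ℝ V]
  (b : OrthonormalBasis ι ℝ V)

theorem sum_inner_mul_apply_s16 (x : V) (L : V →ₗ[ℝ] ℝ) : ∑ i, ⟪x, b i⟫_ℝ * L (b i) = L x := by
  conv_rhs => rw [← b.sum_repr' x]
  simp [real_inner_comm]

theorem sum_sum_inner_mul_inner_mul_apply (t : V →ₗ[ℝ] V →ₗ[ℝ] ℝ) (x y : V) :
    ∑ k, ∑ l, ⟪x, b k⟫_ℝ * ⟪y, b l⟫_ℝ * t (b k) (b l) = t x y := by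
  simp_rw [mul_assoc, ← Finset.mul_sum, b.sum_inner_mul_apply_s16 y]
  exact b.sum_inner_mul_apply_s16 x (t.flip y)

theorem sum_sum_inner_map_mul_apply (A : V → V) (t : V →ₗ[ℝ] V →ₗ[ℝ] ℝ) :
    ∑ k, ∑ l, ⟪A (b k), b l⟫_ℝ * t (b k) (b l) = ∑ k, t (b k) (A (b k)) :=
  Finset.sum_congr rfl fun _ _ => b.sum_inner_mul_apply_s16 _ _

end OrthonormalBasis

section Pairing
variable {V : Type*} [NormedAddCommGroup V] [InnerProductSpace ℝ V]

noncomputable def curvatureI (X Y Z W : V) : ℝ := ⟪X, Z⟫_ℝ * ⟪Y, W⟫_ℝ - ⟪Y, Z⟫_ℝ * ⟪X, W⟫_ℝ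

noncomputable def curvatureIC (J : V →ₗ[ℝ] V) (X Y Z W : V) : ℝ :=
  (4 : ℝ)⁻¹ * (curvatureI X Y Z W + curvatureI (J X) (J Y) Z W + 2 * ⟪J X, Y⟫_ℝ * ⟪J Z, W⟫_ℝ)

variable {ι : Type*} [Fintype ι] (b : OrthonormalBasis ι ℝ V)

theorem sum_sum_curvatureI_mul (t : V →ₗ[ℝ] V →ₗ[ℝ] ℝ) (X Y : V) :
    ∑ k, ∑ l, curvatureI X Y (b k) (b l) * t (b k) (b l) = t X Y - t Y X := by
  simp only [curvatureI, sub_mul, Finset.sum_sub_distrib, b.sum_sum_inner_mul_inner_mul_apply]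

theorem sum_sum_curvatureIC_mul (J : V →ₗ[ℝ] V) (t : V →ₗ[ℝ] V →ₗ[ℝ] ℝ) (X Y : V) :
    ∑ k, ∑ l, curvatureIC J X Y (b k) (b l) * t (b k) (b l) =
      4⁻¹ * (t X Y - t Y X + (t (J X) (J Y) - t (J Y) (J X)) +
        2 * ⟪J X, Y⟫_ℝ * ∑ k, t (b k) (J (b k))) := by
  calc _ = ∑ k, ∑ l, 4⁻¹ * (curvatureI X Y (b k) (b l) * t (b k) (b l) +
          curvatureI (J X) (J Y) (b k) (b l) * t (b k) (b l) +
          2 * ⟪J X, Y⟫_ℝ * (⟪J (b k), b l⟫_ℝ * t (b k) (b l))) := by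
        refine Finset.sum_congr rfl fun k _ => Finset.sum_congr rfl fun l _ => ?_
        rw [curvatureIC]
        ring
    _ = _ := by
        simp only [← Finset.mul_sum, Finset.sum_add_distrib, sum_sum_curvatureI_mul,
          b.sum_sum_inner_map_mul_apply]

theorem sum_curvatureIC_sub_curvatureI_mul (J : V →ₗ[ℝ] V)
    (t : V →ₗ[ℝ] V →ₗ[ℝ] V →ₗ[ℝ] V →ₗ[ℝ] ℝ) :
    ∑ i, ∑ j, ∑ k, ∑ l, (curvatureIC J (b i) (b j) (b k) (b l) -
        curvatureI (b i) (b j) (b k) (b l)) * t (b i) (b j) (b k) (b l) =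
      ∑ i, ∑ j, icSubIPairingTerm t J (b i) (b j) := by
  refine Finset.sum_congr rfl fun i _ => ?_
  have hhol : ∑ j, ⟪J (b i), b j⟫_ℝ * ∑ k, t (b i) (b j) (b k) (J (b k)) =
      ∑ j, t (b i) (J (b i)) (b j) (J (b j)) := by
    simp_rw [Finset.mul_sum]
    rw [Finset.sum_comm]
    exact Finset.sum_congr rfl fun k _ =>
      b.sum_inner_mul_apply_s16 _ (((t (b i)).flip (b k)).flip (J (b k)))
  simp only [sub_mul, Finset.sum_sub_distrib, sum_sum_curvatureIC_mul, sum_sum_curvatureI_mul]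
  simp only [icSubIPairingTerm, ← hhol, mul_add, mul_sub, Finset.sum_add_distrib,
    Finset.sum_sub_distrib, ← Finset.mul_sum, mul_assoc]
  ring

end Pairing

theorem inner_IC_sub_I_eq_neg_six_complexified_scalar_general
    {V : Type*} [NormedAddCommGroup V] [InnerProductSpace ℝ V]
    (m : ℕ) (J : V →ₗ[ℝ] V) (hJ2 : ∀ x, J (J x) = -x)
    (b : OrthonormalBasis (Fin m ⊕ Fin m) ℝ V)
    (hb : ∀ k : Fin m, b (Sum.inr k) = J (b (Sum.inl k)))
    (T : MultilinearMap ℝ (fun _ : Fin 4 => V) ℝ)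
    (hT1 : ∀ X Y Z W : V, T ![X, Y, Z, W] = -T ![Y, X, Z, W])
    (hT2 : ∀ X Y Z W : V, T ![X, Y, Z, W] = -T ![X, Y, W, Z])
    (hT3 : ∀ X Y Z W : V, T ![X, Y, Z, W] = T ![Z, W, X, Y])
    (hTbianchi : ∀ X Y Z W : V,
      T ![X, Y, Z, W] + T ![Y, Z, X, W] + T ![Z, X, Y, W] = 0)
    (Tc : MultilinearMap ℂ (fun _ : Fin 4 => ℂ ⊗[ℝ] V) ℂ)
    (hTc : ∀ v : Fin 4 → V, Tc (fun i => (1 : ℂ) ⊗ₜ[ℝ] v i) = (T v : ℂ)) :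
    let g : V → V → ℝ := fun x y => inner ℝ x y
    let Ifun : V → V → V → V → ℝ := fun X Y Z W => g X Z * g Y W - g Y Z * g X W
    let ICfun : V → V → V → V → ℝ := fun X Y Z W =>
      (4 : ℝ)⁻¹ * (Ifun X Y Z W + Ifun (J X) (J Y) Z W + 2 * g (J X) Y * g (J Z) W)
    let ζ : Fin m → ℂ ⊗[ℝ] V := fun k =>
      ((Real.sqrt 2 : ℂ))⁻¹ •
        ((1 : ℂ) ⊗ₜ[ℝ] b (Sum.inl k) - Complex.I • ((1 : ℂ) ⊗ₜ[ℝ] J (b (Sum.inl k))))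
    let ζbar : Fin m → ℂ ⊗[ℝ] V := fun k =>
      ((Real.sqrt 2 : ℂ))⁻¹ •
        ((1 : ℂ) ⊗ₜ[ℝ] b (Sum.inl k) + Complex.I • ((1 : ℂ) ⊗ₜ[ℝ] J (b (Sum.inl k))))
    ((∑ i, ∑ j, ∑ k, ∑ l,
      (ICfun (b i) (b j) (b k) (b l) - Ifun (b i) (b j) (b k) (b l)) *
        T ![b i, b j, b k, b l] : ℝ) : ℂ) =
      -6 * ∑ k : Fin m, ∑ l : Fin m, Tc ![ζ k, ζ l, ζbar k, ζbar l] := by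
  intro g Ifun ICfun ζ ζbar
  set t := T.curry₄
  have ht : IsAlgebraicCurvatureTensor t := ⟨hT1, hT2, hT3, hTbianchi⟩
  have htc : ∀ X Y Z W : V, Tc.curry₄ (1 ⊗ₜ X) (1 ⊗ₜ Y) (1 ⊗ₜ Z) (1 ⊗ₜ W) = t X Y Z W := by
    intro X Y Z W
    rw [MultilinearMap.curry₄_apply, MultilinearMap.curry₄_apply, ← hTc]
    congr 1
    ext i
    fin_cases i <;> rfl
  have hζ : ∀ k l, Tc ![ζ k, ζ l, ζbar k, ζbar l] =
      ((4⁻¹ * complexScalarTerm t J (b (.inl k)) (b (.inl l)) : ℝ) : ℂ) := fun k l =>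
    apply_holComponent_antiholComponent ht.pair_symm htc J _ _
  calc _ = ((∑ i, ∑ j, icSubIPairingTerm t J (b i) (b j) : ℝ) : ℂ) :=
        congrArg _ (sum_curvatureIC_sub_curvatureI_mul b J t)
    _ = ((∑ k, ∑ l, -(3 / 2) * complexScalarTerm t J (b (.inl k)) (b (.inl l)) : ℝ) : ℂ) := by
        congr 1
        simp only [Fintype.sum_sum_type, hb, ← icSubIPairingTerm_add_J_eq ht hJ2,
          Finset.sum_add_distrib]
        ring
    _ = _ := by
        simp only [hζ, Finset.mul_sum]
        push_cast
        ring_nf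

/-- For any algebraic curvature tensor `T` on a Hermitian vector space of complex
dimension `m`, `⟨I_ℂ - I, T⟩ = -6 Scal_ℂ(T)`, where
`Scal_ℂ(T) = Σ_{k,l} T(ζ_k, ζ_l, conj ζ_k, conj ζ_l)` is computed from the
`ℂ`-multilinear extension `Tc` of `T` to the complexification `ℂ ⊗[ℝ] V`, in an
orthonormal basis `ζ_k = (e_k - i J e_k)/√2` of the `(1,0)`-part. -/
theorem inner_IC_sub_I_eq_neg_six_complexified_scalar
    {V : Type*} [NormedAddCommGroup V] [InnerProductSpace ℝ V]
    (m : ℕ) (J : V →ₗ[ℝ] V) (hJ2 : ∀ x, J (J x) = -x)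
    (hJiso : ∀ x y : V, (inner ℝ (J x) (J y) : ℝ) = inner ℝ x y)
    (b : OrthonormalBasis (Fin m ⊕ Fin m) ℝ V)
    (hb : ∀ k : Fin m, b (Sum.inr k) = J (b (Sum.inl k)))
    (T : MultilinearMap ℝ (fun _ : Fin 4 => V) ℝ)
    (hT1 : ∀ X Y Z W : V, T ![X, Y, Z, W] = -T ![Y, X, Z, W])
    (hT2 : ∀ X Y Z W : V, T ![X, Y, Z, W] = -T ![X, Y, W, Z])
    (hT3 : ∀ X Y Z W : V, T ![X, Y, Z, W] = T ![Z, W, X, Y])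
    (hTbianchi : ∀ X Y Z W : V,
      T ![X, Y, Z, W] + T ![Y, Z, X, W] + T ![Z, X, Y, W] = 0)
    (Tc : MultilinearMap ℂ (fun _ : Fin 4 => ℂ ⊗[ℝ] V) ℂ)
    (hTc : ∀ v : Fin 4 → V, Tc (fun i => (1 : ℂ) ⊗ₜ[ℝ] v i) = (T v : ℂ)) :
    let g : V → V → ℝ := fun x y => inner ℝ x y
    let Ifun : V → V → V → V → ℝ := fun X Y Z W => g X Z * g Y W - g Y Z * g X W
    let ICfun : V → V → V → V → ℝ := fun X Y Z W =>
      (4 : ℝ)⁻¹ * (Ifun X Y Z W + Ifun (J X) (J Y) Z W + 2 * g (J X) Y * g (J Z) W)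
    let ζ : Fin m → ℂ ⊗[ℝ] V := fun k =>
      ((Real.sqrt 2 : ℂ))⁻¹ •
        ((1 : ℂ) ⊗ₜ[ℝ] b (Sum.inl k) - Complex.I • ((1 : ℂ) ⊗ₜ[ℝ] J (b (Sum.inl k))))
    let ζbar : Fin m → ℂ ⊗[ℝ] V := fun k =>
      ((Real.sqrt 2 : ℂ))⁻¹ •
        ((1 : ℂ) ⊗ₜ[ℝ] b (Sum.inl k) + Complex.I • ((1 : ℂ) ⊗ₜ[ℝ] J (b (Sum.inl k))))
    ((∑ i, ∑ j, ∑ k, ∑ l,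
      (ICfun (b i) (b j) (b k) (b l) - Ifun (b i) (b j) (b k) (b l)) *
        T ![b i, b j, b k, b l] : ℝ) : ℂ) =
      -6 * ∑ k : Fin m, ∑ l : Fin m, Tc ![ζ k, ζ l, ζbar k, ζbar l] :=
  inner_IC_sub_I_eq_neg_six_complexified_scalar_general m J hJ2 b hb T hT1 hT2 hT3 hTbianchi Tc hTc
end

section
/- Let u, v be positive C² functions on an open subset of a Riemannian surface satisfying -Δ log(u/v) ≤ 4(u - v) at each point, and suppose u(x) = v(x) at some point x and u ≥ v near x. Then there is a constant A > 0 with -Δ log(u/v) ≤ A log(u/v) near x, and by the strong maximum principle log(u/v) vanishes identically on a neighbourhood of x. -/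
/-!
Near `x` the function `w = log (u / v)` is nonnegative and vanishes at `x`, and the elementary
bound `u - v ≤ u log (u / v)` turns the hypothesis into `Δw ≤ A w` for the analyst's Laplacian
`Δ = -lap`, with `A = 4 (u x + 1)`.

For the strong minimum principle, suppose `w (q) > 0` with `q` close to `x`. The largest ball
`B(q, d)` on which `w > 0` touches the zero set of `w` at a point `p`, an interior minimum, so
`∇w(p) = 0`. On the annulus `d/2 ≤ |y - q| ≤ d` the Gaussian barrier
`g = exp (-α |y - q|²) - exp (-α d²)` satisfies `Δg ≥ A g` once `α` is large, so `w - ε g` is a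
supersolution that is nonnegative on the boundary of the annulus for small `ε > 0`. Since `A > 0`,
the weak minimum principle for it is just the fact that `Δ ≥ 0` at a minimum; hence `w ≥ ε g` on
the annulus, and as `g` vanishes at `p` with positive inward derivative, so does `w`: Hopf's lemma,
contradicting `∇w(p) = 0`.
-/

open Filter Topology Metric Set Real InnerProductSpace Laplacian

theorem IsLocalMin.deriv_deriv_nonneg {g : ℝ → ℝ} {a : ℝ} (hmin : IsLocalMin g a)
    (hc : ContinuousAt g a) : 0 ≤ deriv (deriv g) a := by
  by_contra! hneg
  have hmax : IsLocalMax g a := isLocalMax_of_deriv_deriv_neg hneg hmin.deriv_eq_zero hc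
  have hconst : g =ᶠ[𝓝 a] fun _ => g a := by
    filter_upwards [hmin, hmax] with t h₁ h₂ using le_antisymm h₂ h₁
  rw [hconst.deriv.deriv_eq] at hneg
  simp at hneg

section NormedSpace

variable {F G : Type*} [NormedAddCommGroup F] [NormedSpace ℝ F] [NormedAddCommGroup G]
  [NormedSpace ℝ G] {f : F → ℝ} {p : F}

theorem hasDerivAt_comp_add_smul {g : F → G} (e : F) {t : ℝ}
    (hg : DifferentiableAt ℝ g (p + t • e)) :
    HasDerivAt (fun s : ℝ => g (p + s • e)) (fderiv ℝ g (p + t • e) e) t :=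
  hg.hasFDerivAt.comp_hasDerivAt t (by simpa using ((hasDerivAt_id t).smul_const e).const_add p)

theorem tendsto_add_smul_nhds_zero (p e : F) :
    Tendsto (fun t : ℝ => p + t • e) (𝓝 0) (𝓝 p) := by
  have hline : Continuous fun t : ℝ => p + t • e := by fun_prop
  simpa using hline.tendsto 0

theorem ContDiffAt.hasDerivAt_fderiv_apply_add_smul (hf : ContDiffAt ℝ 2 f p) (e : F) :
    HasDerivAt (fun t : ℝ => fderiv ℝ f (p + t • e) e) (iteratedFDeriv ℝ 2 f p ![e, e]) 0 := by
  have hf' : DifferentiableAt ℝ (fderiv ℝ f) (p + (0 : ℝ) • e) := by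
    simpa using (hf.fderiv_right (m := 1) le_rfl).differentiableAt one_ne_zero
  rw [iteratedFDeriv_two_apply]
  simpa [Function.comp_def] using
    (ContinuousLinearMap.apply ℝ ℝ e).hasFDerivAt.comp_hasDerivAt 0 (hasDerivAt_comp_add_smul e hf')

theorem ContDiffAt.eventually_hasDerivAt_comp_add_smul (hf : ContDiffAt ℝ 2 f p) (e : F) :
    ∀ᶠ t in 𝓝 (0 : ℝ), HasDerivAt (fun s : ℝ => f (p + s • e)) (fderiv ℝ f (p + t • e) e) t := by
  filter_upwards [(tendsto_add_smul_nhds_zero p e).eventually (hf.eventually (by simp))] with t ht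
  exact hasDerivAt_comp_add_smul e (ht.differentiableAt (by norm_num))

theorem iteratedFDeriv_two_apply_eq_of_hasDerivAt (hf : ContDiffAt ℝ 2 f p) {e : F}
    {g' : ℝ → ℝ} {c : ℝ} (hg : ∀ᶠ t in 𝓝 0, HasDerivAt (fun s : ℝ => f (p + s • e)) (g' t) t)
    (hg' : HasDerivAt g' c 0) :
    iteratedFDeriv ℝ 2 f p ![e, e] = c := by
  have hslope : (fun t : ℝ => fderiv ℝ f (p + t • e) e) =ᶠ[𝓝 0] g' := by
    filter_upwards [hg, hf.eventually_hasDerivAt_comp_add_smul e] with t h₁ h₂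
    exact h₂.unique h₁
  exact (hf.hasDerivAt_fderiv_apply_add_smul e).unique (hg'.congr_of_eventuallyEq hslope)

theorem IsLocalMin.iteratedFDeriv_two_nonneg (hmin : IsLocalMin f p) (hf : ContDiffAt ℝ 2 f p)
    (e : F) : 0 ≤ iteratedFDeriv ℝ 2 f p ![e, e] := by
  have hslope : deriv (fun s : ℝ => f (p + s • e)) =ᶠ[𝓝 0] fun t => fderiv ℝ f (p + t • e) e := by
    filter_upwards [hf.eventually_hasDerivAt_comp_add_smul e] with t ht using ht.deriv
  rw [← (hf.hasDerivAt_fderiv_apply_add_smul e).deriv, ← hslope.deriv_eq]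
  refine IsLocalMin.deriv_deriv_nonneg ?_ ?_
  · simpa [IsLocalMin, IsMinFilter] using (tendsto_add_smul_nhds_zero p e).eventually hmin
  · simpa [ContinuousAt, Function.comp_def] using
      hf.continuousAt.tendsto.comp (tendsto_add_smul_nhds_zero p e)

theorem segment_subset_closedBall_sdiff_ball {p q : F} {d : ℝ} (hp : dist p q = d) :
    segment ℝ p (p + (1 / 2 : ℝ) • (q - p)) ⊆ closedBall q d \ ball q (d / 2) := by
  rw [segment_eq_image']
  rintro _ ⟨θ, ⟨hθ₀, hθ₁⟩, rfl⟩
  have hd : 0 ≤ d := hp ▸ dist_nonneg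
  have hnorm : ‖p + θ • (p + (1 / 2 : ℝ) • (q - p) - p) - q‖ = (1 - θ / 2) * d := by
    rw [show p + θ • (p + (1 / 2 : ℝ) • (q - p) - p) - q = (1 - θ / 2) • (p - q) by module,
      norm_smul, Real.norm_of_nonneg (by linarith), ← dist_eq_norm, hp]
  simp only [Set.mem_sdiff, mem_closedBall, mem_ball, dist_eq_norm, hnorm, not_lt]
  constructor <;> nlinarith

end NormedSpace

theorem closedBall_sdiff_ball_sdiff_subset_sphere_union_sphere {X : Type*} [PseudoMetricSpace X]
    (x : X) (r R : ℝ) :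
    (closedBall x R \ ball x r) \ (ball x R \ closedBall x r) ⊆ sphere x R ∪ sphere x r := by
  rintro y ⟨⟨hR, hr⟩, hU⟩
  simp only [mem_closedBall, mem_ball, not_lt, Set.mem_sdiff, not_and, not_le] at hR hr hU
  rcases hR.lt_or_eq with hlt | heq
  · exact Or.inr (mem_sphere.2 (le_antisymm (hU hlt) hr))
  · exact Or.inl heq

theorem exists_one_le_and_le_mul_sq (B : ℝ) {d : ℝ} (hd : 0 < d) :
    ∃ α : ℝ, 1 ≤ α ∧ B ≤ α * d ^ 2 := by
  have : 0 ≤ |B| / d ^ 2 := by positivity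
  refine ⟨|B| / d ^ 2 + 1, by linarith, ?_⟩
  rw [add_mul, div_mul_cancel₀ _ (by positivity)]
  nlinarith [le_abs_self B]

section InnerProductSpace

variable {E : Type*} [NormedAddCommGroup E] [InnerProductSpace ℝ E]

theorem contDiff_exp_neg_mul_norm_sub_sq (α : ℝ) (q : E) :
    ContDiff ℝ 2 fun z : E => exp (-α * ‖z - q‖ ^ 2) :=
  contDiff_exp.comp <| contDiff_const.mul <|
    (contDiff_norm_sq ℝ).comp (contDiff_id.sub contDiff_const)

theorem hasFDerivAt_exp_neg_mul_norm_sub_sq (α : ℝ) (q p : E) :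
    HasFDerivAt (fun z : E => exp (-α * ‖z - q‖ ^ 2))
      ((-2 * α * exp (-α * ‖p - q‖ ^ 2)) • innerSL ℝ (p - q)) p := by
  refine (((hasFDerivAt_id p).sub_const q).norm_sq.const_mul (-α)).exp.congr_fderiv ?_
  ext v
  simp only [id_eq, neg_mul, map_sub, ContinuousLinearMap.comp_id, neg_smul, smul_neg, neg_apply,
    smul_apply, sub_apply, coe_innerSL_apply, nsmul_eq_mul, Nat.cast_ofNat, smul_eq_mul]
  ring

theorem iteratedFDeriv_two_exp_neg_mul_norm_sub_sq (α : ℝ) (q y e : E) :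
    iteratedFDeriv ℝ 2 (fun z : E => exp (-α * ‖z - q‖ ^ 2)) y ![e, e] =
      (4 * α ^ 2 * inner ℝ (y - q) e ^ 2 - 2 * α * ‖e‖ ^ 2) * exp (-α * ‖y - q‖ ^ 2) := by
  have hline (t : ℝ) : HasDerivAt (fun s : ℝ => y + s • e - q) e t := by
    simpa using (((hasDerivAt_id t).smul_const e).const_add y).sub_const q
  refine iteratedFDeriv_two_apply_eq_of_hasDerivAt
    (g' := fun t => -2 * α * inner ℝ (y + t • e - q) e * exp (-α * ‖y + t • e - q‖ ^ 2))
    (contDiff_exp_neg_mul_norm_sub_sq α q).contDiffAt (Eventually.of_forall fun t => ?_) ?_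
  · exact (((hline t).norm_sq).const_mul (-α)).exp.congr_deriv (by ring)
  · have := (((hline 0).inner ℝ (hasDerivAt_const 0 e)).const_mul (-2 * α)).mul
      (((hline 0).norm_sq).const_mul (-α)).exp
    simp only [zero_smul, add_zero, inner_zero_right, zero_add, real_inner_self_eq_norm_sq] at this
    exact this.congr_deriv (by ring)

variable [FiniteDimensional ℝ E]

theorem IsLocalMin.laplacian_nonneg {f : E → ℝ} {p : E} (hmin : IsLocalMin f p)
    (hf : ContDiffAt ℝ 2 f p) : 0 ≤ Δ f p := by
  rw [laplacian_eq_iteratedFDeriv_stdOrthonormalBasis]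
  exact Finset.sum_nonneg fun i _ => hmin.iteratedFDeriv_two_nonneg hf _

theorem laplacian_exp_neg_mul_norm_sub_sq (α : ℝ) (q y : E) :
    Δ (fun z : E => exp (-α * ‖z - q‖ ^ 2)) y =
      (4 * α ^ 2 * ‖y - q‖ ^ 2 - 2 * Module.finrank ℝ E * α) * exp (-α * ‖y - q‖ ^ 2) := by
  simp only [laplacian_eq_iteratedFDeriv_stdOrthonormalBasis,
    iteratedFDeriv_two_exp_neg_mul_norm_sub_sq, ← Finset.sum_mul, Finset.sum_sub_distrib,
    ← Finset.mul_sum, (stdOrthonormalBasis ℝ E).sum_sq_inner_left, OrthonormalBasis.norm_eq_one,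
    one_pow, Finset.sum_const, Finset.card_univ, Fintype.card_fin, nsmul_eq_mul, mul_one]
  ring

theorem mul_le_laplacian_exp_neg_mul_norm_sub_sq_sub {A α d C : ℝ} (hA : 0 ≤ A) (hC : 0 ≤ C)
    (hα : 1 ≤ α) (hd : 0 ≤ d) (hαd : A + 2 * Module.finrank ℝ E ≤ α * d ^ 2) {q y : E}
    (hy : d ≤ 2 * ‖y - q‖) :
    A * (exp (-α * ‖y - q‖ ^ 2) - C) ≤ Δ (fun z : E => exp (-α * ‖z - q‖ ^ 2) - C) y := by
  have hsub : Δ (fun z : E => exp (-α * ‖z - q‖ ^ 2) - C) y =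
      Δ (fun z : E => exp (-α * ‖z - q‖ ^ 2)) y := by
    rw [← Pi.sub_def, (contDiff_exp_neg_mul_norm_sub_sq α q).contDiffAt.laplacian_sub
      contDiffAt_const, laplacian_const]
    simp
  rw [hsub, laplacian_exp_neg_mul_norm_sub_sq]
  have hexp := exp_pos (-α * ‖y - q‖ ^ 2)
  have hdy : d ^ 2 ≤ 4 * ‖y - q‖ ^ 2 := by nlinarith
  have hcoef : A + 2 * Module.finrank ℝ E * α ≤ 4 * α ^ 2 * ‖y - q‖ ^ 2 := by
    nlinarith [mul_le_mul_of_nonneg_left hαd (by linarith : (0 : ℝ) ≤ α)]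
  nlinarith

theorem IsCompact.nonneg_of_laplacian_le_mul {K U : Set E} (hK : IsCompact K) (hU : IsOpen U)
    (hUK : U ⊆ K) {f : E → ℝ} {A : ℝ} (hA : 0 < A) (hcont : ContinuousOn f K)
    (hf : ∀ y ∈ U, ContDiffAt ℝ 2 f y) (hΔ : ∀ y ∈ U, Δ f y ≤ A * f y)
    (hbdry : ∀ y ∈ K \ U, 0 ≤ f y) : ∀ y ∈ K, 0 ≤ f y := by
  by_contra! ⟨y, hyK, hy⟩
  obtain ⟨p, hpK, hpmin⟩ := hK.exists_isMinOn ⟨y, hyK⟩ hcont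
  have hp : f p < 0 := (hpmin hyK).trans_lt hy
  have hpU : p ∈ U := by_contra fun hpU => (hbdry p ⟨hpK, hpU⟩).not_gt hp
  have hΔp : 0 ≤ Δ f p :=
    (hpmin.on_subset hUK).isLocalMin (hU.mem_nhds hpU) |>.laplacian_nonneg (hf p hpU)
  nlinarith [hΔ p hpU]

theorem mul_exp_neg_mul_norm_sub_sq_sub_le {w : E → ℝ} {q : E} {d A α ε : ℝ} (hA : 0 < A)
    (hd : 0 < d) (hα : 1 ≤ α) (hαd : A + 2 * Module.finrank ℝ E ≤ α * d ^ 2) (hε : 0 ≤ ε)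
    (hw : ∀ y ∈ closedBall q d, ContDiffAt ℝ 2 w y) (hΔ : ∀ y ∈ ball q d, Δ w y ≤ A * w y)
    (hnonneg : ∀ y ∈ sphere q d, 0 ≤ w y) (hεw : ∀ y ∈ sphere q (d / 2), ε ≤ w y) :
    ∀ y ∈ closedBall q d \ ball q (d / 2),
      ε * (exp (-α * ‖y - q‖ ^ 2) - exp (-α * d ^ 2)) ≤ w y := by
  set g : E → ℝ := fun z => exp (-α * ‖z - q‖ ^ 2) - exp (-α * d ^ 2)
  have hg : ContDiff ℝ 2 g := (contDiff_exp_neg_mul_norm_sub_sq α q).sub contDiff_const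
  have hεg : ContDiff ℝ 2 (ε • g) := hg.const_smul ε
  have hg_le (z : E) : g z ≤ 1 := by
    have : exp (-α * ‖z - q‖ ^ 2) ≤ 1 := exp_le_one_iff.2 (by nlinarith [sq_nonneg ‖z - q‖])
    linarith [exp_pos (-α * d ^ 2)]
  suffices ∀ y ∈ closedBall q d \ ball q (d / 2), 0 ≤ (w - ε • g) y from
    fun y hy => by simpa [g] using this y hy
  refine ((isCompact_closedBall q d).diff isOpen_ball).nonneg_of_laplacian_le_mul
    (isOpen_ball.sdiff isClosed_closedBall)
    (sdiff_subset_sdiff ball_subset_closedBall ball_subset_closedBall) hA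
    (fun y hy => ((hw y hy.1).continuousAt.sub hεg.continuous.continuousAt).continuousWithinAt)
    (fun y hy => (hw y (ball_subset_closedBall hy.1)).sub hεg.contDiffAt) ?_ ?_
  · rintro y ⟨hyd, hyd2⟩
    have hy : d ≤ 2 * ‖y - q‖ := by
      rw [mem_closedBall, not_le, dist_eq_norm] at hyd2; linarith
    have hgy := mul_le_laplacian_exp_neg_mul_norm_sub_sq_sub hA.le (exp_pos (-α * d ^ 2)).le hα
      hd.le hαd hy
    rw [(hw y (ball_subset_closedBall hyd)).laplacian_sub hεg.contDiffAt,
      laplacian_smul _ hg.contDiffAt]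
    simp only [Pi.sub_apply, Pi.smul_apply, smul_eq_mul]
    nlinarith [hΔ y hyd]
  · intro y hy
    simp only [Pi.sub_apply, Pi.smul_apply, smul_eq_mul]
    rcases closedBall_sdiff_ball_sdiff_subset_sphere_union_sphere q (d / 2) d hy with hyd | hyd
    · have : g y = 0 := by simp [g, ← dist_eq_norm, mem_sphere.1 hyd]
      simp [this, hnonneg y hyd]
    · nlinarith [hg_le y, hεw y hyd]

theorem hopf_lemma {w : E → ℝ} {q p : E} {d A : ℝ} (hA : 0 < A) (hd : 0 < d)
    (hw : ∀ y ∈ closedBall q d, ContDiffAt ℝ 2 w y) (hΔ : ∀ y ∈ ball q d, Δ w y ≤ A * w y)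
    (hnonneg : ∀ y ∈ sphere q d, 0 ≤ w y) (hpos : ∀ y ∈ ball q d, 0 < w y)
    (hp : dist p q = d) (hwp : w p = 0) : 0 < fderiv ℝ w p (q - p) := by
  have : Nontrivial E := ⟨⟨p, q, dist_pos.1 (hp.symm ▸ hd)⟩⟩
  obtain ⟨α, hα, hαd⟩ := exists_one_le_and_le_mul_sq (A + 2 * Module.finrank ℝ E) hd
  have hsphere : sphere q (d / 2) ⊆ ball q d := fun y hy => by
    rw [mem_sphere] at hy; rw [mem_ball]; linarith
  obtain ⟨m, hm, hm_min⟩ := (isCompact_sphere q (d / 2)).exists_isMinOn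
    (NormedSpace.sphere_nonempty.2 (by positivity))
    fun y hy => (hw y (ball_subset_closedBall (hsphere hy))).continuousAt.continuousWithinAt
  set ε := w m
  have hε : 0 < ε := hpos m (hsphere hm)
  have hcomp := mul_exp_neg_mul_norm_sub_sq_sub_le hA hd hα hαd hε.le hw hΔ hnonneg hm_min
  have hpq : ‖p - q‖ = d := by rw [← dist_eq_norm, hp]
  set φ : E → ℝ := fun z => w z - ε * (exp (-α * ‖z - q‖ ^ 2) - exp (-α * d ^ 2))
  have hp_min : IsMinOn φ (closedBall q d \ ball q (d / 2)) p := fun y hy => by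
    simpa [φ, hwp, hpq] using hcomp y hy
  have hφ' : HasFDerivAt φ
      (fderiv ℝ w p - ε • (-2 * α * exp (-α * d ^ 2)) • innerSL ℝ (p - q)) p := by
    have := ((hw p (mem_closedBall.2 hp.le)).differentiableAt (by norm_num)).hasFDerivAt.sub
      (((hasFDerivAt_exp_neg_mul_norm_sub_sq α q p).sub_const (exp (-α * d ^ 2))).const_mul ε)
    rw [hpq] at this
    exact this
  have key := hp_min.localize.hasFDerivWithinAt_nonneg hφ'.hasFDerivWithinAt
    (mem_posTangentConeAt_of_segment_subset (segment_subset_closedBall_sdiff_ball hp))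
  have hinner : inner ℝ (p - q) (q - p) = -d ^ 2 := by
    rw [← neg_sub p q, inner_neg_right, real_inner_self_eq_norm_sq, hpq]
  simp only [sub_apply, smul_apply, innerSL_apply_apply, map_smul, hinner, smul_eq_mul] at key
  have hslope : 0 < ε * (α * (d ^ 2 * exp (-α * d ^ 2))) := by
    have : 0 < α := by linarith
    positivity
  linarith

theorem eventually_eq_zero_of_nonneg_of_laplacian_le {w : E → ℝ} {x : E} {A : ℝ} (hA : 0 < A)
    (hw : ∀ᶠ y in 𝓝 x, ContDiffAt ℝ 2 w y) (hnonneg : ∀ᶠ y in 𝓝 x, 0 ≤ w y)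
    (hΔ : ∀ᶠ y in 𝓝 x, Δ w y ≤ A * w y) (hx : w x = 0) : ∀ᶠ y in 𝓝 x, w y = 0 := by
  obtain ⟨R, hR, hball⟩ := nhds_basis_closedBall.eventually_iff.1 ((hw.and hnonneg).and hΔ)
  filter_upwards [ball_mem_nhds x (by positivity : 0 < R / 4)] with q hq
  by_contra hwq
  set Z := closedBall x R ∩ w ⁻¹' {0}
  have hZ : IsCompact Z := (isCompact_closedBall x R).of_isClosed_subset
    (ContinuousOn.preimage_isClosed_of_isClosed
      (fun y hy => (hball hy).1.1.continuousAt.continuousWithinAt)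
      isClosed_closedBall isClosed_singleton) inter_subset_left
  have hxZ : x ∈ Z := ⟨mem_closedBall_self hR.le, hx⟩
  obtain ⟨p, hpZ, hpd⟩ := hZ.exists_infDist_eq_dist ⟨x, hxZ⟩ q
  set d := infDist q Z
  have hd : 0 < d := (hZ.isClosed.notMem_iff_infDist_pos ⟨x, hxZ⟩).1 fun h => hwq h.2
  have hdR : d < R / 4 := (infDist_le_dist_of_mem hxZ).trans_lt hq
  have hsub : closedBall q d ⊆ ball x (R / 2) := fun y hy => by
    rw [mem_closedBall] at hy; rw [mem_ball] at hq ⊢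
    linarith [dist_triangle y q x]
  have hR2 : ball x (R / 2) ⊆ closedBall x R :=
    (ball_subset_ball (by linarith)).trans ball_subset_closedBall
  have hpos : ∀ y ∈ ball q d, 0 < w y := fun y hy => by
    refine ((hball (hR2 (hsub (ball_subset_closedBall hy)))).1.2).lt_of_ne' fun hy0 => ?_
    have hyZ : y ∈ Z := ⟨hR2 (hsub (ball_subset_closedBall hy)), hy0⟩
    have := infDist_le_dist_of_mem (x := q) hyZ
    rw [mem_ball, dist_comm] at hy
    linarith
  have hp : dist p q = d := by rw [hpd, dist_comm]
  have hp_min : IsLocalMin w p := by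
    have hpx : p ∈ ball x (R / 2) := hsub (mem_closedBall.2 hp.le)
    filter_upwards [isOpen_ball.mem_nhds hpx] with y hy
    rw [hpZ.2]
    exact (hball (hR2 hy)).1.2
  have hhopf := hopf_lemma hA hd (fun y hy => (hball (hR2 (hsub hy))).1.1)
    (fun y hy => (hball (hR2 (hsub (ball_subset_closedBall hy)))).2)
    (fun y hy => (hball (hR2 (hsub (sphere_subset_closedBall hy)))).1.2) hpos hp hpZ.2
  rw [hp_min.fderiv_eq_zero] at hhopf
  simp at hhopf

end InnerProductSpace

theorem sub_le_mul_log_div {u v : ℝ} (hu : 0 < u) (hv : 0 < v) : u - v ≤ u * log (u / v) := by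
  have h := one_sub_inv_le_log_of_pos (div_pos hu hv)
  rw [inv_div, one_sub_div hu.ne'] at h
  rwa [div_le_iff₀' hu] at h

/-- Schoen–Yau type strong maximum principle step.  Let `u, v` be positive `C²` functions
on an open subset of a surface (here a chart, an open subset of `ℝ²`, with `Δ` the
geometer's Laplacian `Δw = -(∂²w/∂x² + ∂²w/∂y²)`) satisfying `-Δ log(u/v) ≤ 4(u - v)`,
and suppose `u(x) = v(x)` at some point `x` with `u ≥ v` near `x`.  Then there is `A > 0`
with `-Δ log(u/v) ≤ A log(u/v)` near `x`, and `log(u/v)` vanishes identically near `x`. -/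
theorem schoen_yau_strong_maximum_principle
    (Ω : Set (EuclideanSpace ℝ (Fin 2))) (hΩ : IsOpen Ω)
    (u v : EuclideanSpace ℝ (Fin 2) → ℝ)
    (hu : ContDiffOn ℝ 2 u Ω) (hv : ContDiffOn ℝ 2 v Ω)
    (hupos : ∀ y ∈ Ω, 0 < u y) (hvpos : ∀ y ∈ Ω, 0 < v y)
    (lap : (EuclideanSpace ℝ (Fin 2) → ℝ) → EuclideanSpace ℝ (Fin 2) → ℝ)
    (hlap : ∀ w p, lap w p =
      -((iteratedFDeriv ℝ 2 w p) ![EuclideanSpace.single 0 1, EuclideanSpace.single 0 1] +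
        (iteratedFDeriv ℝ 2 w p) ![EuclideanSpace.single 1 1, EuclideanSpace.single 1 1]))
    (hineq : ∀ y ∈ Ω,
      -(lap (fun p => Real.log (u p / v p)) y) ≤ 4 * (u y - v y))
    (x : EuclideanSpace ℝ (Fin 2)) (hx : x ∈ Ω)
    (heq : u x = v x) (hge : ∀ᶠ y in nhds x, v y ≤ u y) :
    (∃ A > (0 : ℝ), ∀ᶠ y in nhds x,
      -(lap (fun p => Real.log (u p / v p)) y) ≤ A * Real.log (u y / v y)) ∧
    (∀ᶠ y in nhds x, u y = v y) := by
  have hlap_eq (f : EuclideanSpace ℝ (Fin 2) → ℝ) (y) : -lap f y = Δ f y := by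
    simp [hlap, laplacian_eq_iteratedFDeriv_orthonormalBasis f (EuclideanSpace.basisFun (Fin 2) ℝ)]
  have hΩx : Ω ∈ 𝓝 x := hΩ.mem_nhds hx
  have hlog_nonneg : ∀ᶠ y in 𝓝 x, 0 ≤ log (u y / v y) := by
    filter_upwards [hΩx, hge] with y hy hvu using log_nonneg ((one_le_div (hvpos y hy)).2 hvu)
  have hbound : ∀ᶠ y in 𝓝 x,
      -lap (fun p => log (u p / v p)) y ≤ 4 * (u x + 1) * log (u y / v y) := by
    filter_upwards [hΩx, hlog_nonneg, (hu.continuousOn.continuousAt hΩx).eventually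
      (gt_mem_nhds (lt_add_one (u x)))] with y hy hlog hux
    calc -lap (fun p => log (u p / v p)) y ≤ 4 * (u y - v y) := hineq y hy
      _ ≤ 4 * (u y * log (u y / v y)) := by
        gcongr; exact sub_le_mul_log_div (hupos y hy) (hvpos y hy)
      _ ≤ 4 * (u x + 1) * log (u y / v y) := by rw [← mul_assoc]; gcongr
  have hA : 0 < 4 * (u x + 1) := by linarith [hupos x hx]
  have hw : ∀ᶠ y in 𝓝 x, ContDiffAt ℝ 2 (fun p => log (u p / v p)) y := by
    filter_upwards [hΩ.eventually_mem hx] with y hy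
    refine ((hu.div hv fun z hz => (hvpos z hz).ne').log fun z hz => ?_).contDiffAt (hΩ.mem_nhds hy)
    exact (div_pos (hupos z hz) (hvpos z hz)).ne'
  have hzero := eventually_eq_zero_of_nonneg_of_laplacian_le hA hw hlog_nonneg
    (by simpa [hlap_eq] using hbound) (by simp [heq, div_self (hvpos x hx).ne'])
  refine ⟨⟨_, hA, hbound⟩, ?_⟩
  filter_upwards [hzero, hΩx] with y hy hyΩ
  have hpos := div_pos (hupos y hyΩ) (hvpos y hyΩ)
  exact (div_eq_one_iff_eq (hvpos y hyΩ).ne').1 (eq_one_of_pos_of_log_eq_zero hpos hy)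
end
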